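/- arXiv:2408.05832 — 5 statements merged into one kernel-verified Lean document; each statement's English description precedes it below -/
import Mathlib

section
/- Fix real numbers a, b > 0 and s ∈ ℕ. Let g, o : Fin s → ℝ be nonnegative functions with g(i) ≤ a and o(i) ≥ g(i) + b for all i. Let R ⊆ Fin s, and let g', o' : Fin s → ℝ be nonnegative functions such that g'(i) ≤ g(i) and o'(i) ≤ o(i) for all i ∈ R, while g'(i) = g(i) and o'(i) = o(i) for all i ∉ R. If ∑ᵢ g'(i) > ∑ᵢ o'(i), then |R| > (b/(a+b)) · s. -/
/-- **Urn lemma.** If each of `s` urns has at most `a` green balls and at least `b` more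
orange balls than green balls, and after discarding balls from the urns in `R` the total
number of green balls exceeds the total number of orange balls, then `|R| > (b/(a+b))·s`. -/
theorem urn_lemma (a b : ℝ) (ha : 0 < a) (hb : 0 < b) (s : ℕ)
    (g o g' o' : Fin s → ℝ)
    (hg0 : ∀ i, 0 ≤ g i) (ho0 : ∀ i, 0 ≤ o i)
    (hg'0 : ∀ i, 0 ≤ g' i) (ho'0 : ∀ i, 0 ≤ o' i)
    (hga : ∀ i, g i ≤ a) (hob : ∀ i, g i + b ≤ o i)
    (R : Finset (Fin s))
    (hg' : ∀ i ∈ R, g' i ≤ g i) (ho' : ∀ i ∈ R, o' i ≤ o i)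
    (hg'eq : ∀ i ∉ R, g' i = g i) (ho'eq : ∀ i ∉ R, o' i = o i)
    (hsum : ∑ i, o' i < ∑ i, g' i) :
    (b / (a + b)) * s < R.card := by
  have hab : (0:ℝ) < a + b := by linarith
  have key : (0:ℝ) < ∑ i, (g' i - o' i) := by
    rw [Finset.sum_sub_distrib]; linarith
  have hsplit : ∑ i, (g' i - o' i)
      = ∑ i ∈ R, (g' i - o' i) + ∑ i ∈ Rᶜ, (g' i - o' i) :=
    (Finset.sum_add_sum_compl R _).symm
  have h1 : ∑ i ∈ R, (g' i - o' i) ≤ a * R.card := by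
    rw [mul_comm]
    calc ∑ i ∈ R, (g' i - o' i) ≤ ∑ i ∈ R, a := by
          apply Finset.sum_le_sum
          intro i hi
          have := hg' i hi; have := ho'0 i; have := hga i; linarith
      _ = R.card * a := by rw [Finset.sum_const, nsmul_eq_mul]
  have h2 : ∑ i ∈ Rᶜ, (g' i - o' i) ≤ (Rᶜ.card : ℝ) * (-b) := by
    calc ∑ i ∈ Rᶜ, (g' i - o' i) ≤ ∑ i ∈ Rᶜ, (-b) := by
          apply Finset.sum_le_sum
          intro i hi
          rw [Finset.mem_compl] at hi
          rw [hg'eq i hi, ho'eq i hi]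
          have := hob i; linarith
      _ = (Rᶜ.card : ℝ) * (-b) := by rw [Finset.sum_const, nsmul_eq_mul]
  have hcard : (Rᶜ.card : ℝ) = s - R.card := by
    have := Finset.card_compl R
    rw [this]
    have hle : R.card ≤ Fintype.card (Fin s) := Finset.card_le_univ R
    rw [Nat.cast_sub hle, Fintype.card_fin]
  rw [hcard] at h2
  rw [div_mul_eq_mul_div, div_lt_iff₀ hab]
  nlinarith [hsplit, key, h1, h2]
end

section
/- Let γ : [0,1] → ℝ² be a continuous curve whose length (total variation) is at most 1. Then the set of pairs (i,j) ∈ ℤ² such that the image of γ intersects the open square (i,i+1) × (j,j+1) has cardinality at most 4. -/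
/-- The open unit grid square with lower-left corner `(i, j)`. -/
def openGridSquare (i j : ℤ) : Set (EuclideanSpace ℝ (Fin 2)) :=
  {p | p 0 ∈ Set.Ioo (i : ℝ) (i + 1) ∧ p 1 ∈ Set.Ioo (j : ℝ) (j + 1)}

/-!
Any two points on the curve are at distance at most its length, hence at most 1, and so are
their coordinates. Two points of the open intervals `(a, a + 1)` and `(b, b + 1)` that are at
distance at most 1 force `|a - b| ≤ 1`; so the squares met have first indices in some
`{m, m + 1}` and second indices in some `{n, n + 1}`, which leaves at most four squares.
-/

open Set

theorem dist_le_one_of_eVariationOn_le_one {α E : Type*} [LinearOrder α] [PseudoMetricSpace E]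
    {f : α → E} {s : Set α} (hf : eVariationOn f s ≤ 1) {x y : α} (hx : x ∈ s) (hy : y ∈ s) :
    dist (f x) (f y) ≤ 1 := by
  rw [← edist_le_ofReal zero_le_one, ENNReal.ofReal_one]
  exact (eVariationOn.edist_le f hx hy).trans hf

theorem Int.le_add_one_of_mem_Ioo {a b : ℤ} {x y : ℝ} (hx : x ∈ Ioo (a : ℝ) (a + 1))
    (hy : y ∈ Ioo (b : ℝ) (b + 1)) (hxy : x ≤ y + 1) : a ≤ b + 1 := by
  have : (a : ℝ) < b + 1 + 1 := by linarith [hx.1, hy.2]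
  exact Int.lt_add_one_iff.mp (by exact_mod_cast this)

theorem Int.encard_le_two_of_forall_le_add_one {S : Set ℤ}
    (hS : ∀ a ∈ S, ∀ b ∈ S, a ≤ b + 1) : S.encard ≤ 2 := by
  rcases S.eq_empty_or_nonempty with rfl | ⟨a, ha⟩
  · simp
  obtain ⟨m, hmS, hm⟩ :=
    Int.exists_least_of_bdd ⟨a - 1, fun b hb => by linarith [hS a ha b hb]⟩ ⟨a, ha⟩
  have hsub : S ⊆ {m, m + 1} := fun b hb => by
    have := hm b hb
    have := hS b hb m hmS
    rw [mem_insert_iff, mem_singleton_iff]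
    omega
  calc S.encard ≤ ({m, m + 1} : Set ℤ).encard := encard_mono hsub
    _ ≤ 2 := by rw [encard_pair (by omega)]

theorem Int.encard_le_four_of_forall_le_add_one {S : Set (ℤ × ℤ)}
    (hS : ∀ p ∈ S, ∀ q ∈ S, p.1 ≤ q.1 + 1 ∧ p.2 ≤ q.2 + 1) : S.encard ≤ 4 := by
  have hfst : (Prod.fst '' S).encard ≤ 2 := Int.encard_le_two_of_forall_le_add_one <| by
    rintro _ ⟨p, hp, rfl⟩ _ ⟨q, hq, rfl⟩
    exact (hS p hp q hq).1
  have hsnd : (Prod.snd '' S).encard ≤ 2 := Int.encard_le_two_of_forall_le_add_one <| by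
    rintro _ ⟨p, hp, rfl⟩ _ ⟨q, hq, rfl⟩
    exact (hS p hp q hq).2
  calc S.encard ≤ ((Prod.fst '' S) ×ˢ (Prod.snd '' S)).encard := encard_mono subset_prod
    _ = (Prod.fst '' S).encard * (Prod.snd '' S).encard := encard_prod
    _ ≤ 2 * 2 := mul_le_mul' hfst hsnd
    _ = 4 := by norm_num

theorem curve_meets_at_most_four_squares_general (γ : ℝ → EuclideanSpace ℝ (Fin 2))
    (hlen : eVariationOn γ (Set.Icc 0 1) ≤ 1) :
    {ij : ℤ × ℤ | (γ '' Set.Icc 0 1 ∩ openGridSquare ij.1 ij.2).Nonempty}.encard ≤ 4 := by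
  refine Int.encard_le_four_of_forall_le_add_one ?_
  rintro p ⟨_, ⟨s, hs, rfl⟩, hp⟩ q ⟨_, ⟨t, ht, rfl⟩, hq⟩
  have hst := dist_le_one_of_eVariationOn_le_one hlen hs ht
  have hcoord (k : Fin 2) : γ s k ≤ γ t k + 1 := by
    have := (PiLp.dist_apply_le (γ s) (γ t) k).trans hst
    rw [Real.dist_eq, abs_le] at this
    linarith [this.2]
  exact ⟨Int.le_add_one_of_mem_Ioo hp.1 hq.1 (hcoord 0),
    Int.le_add_one_of_mem_Ioo hp.2 hq.2 (hcoord 1)⟩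

/-- A continuous curve in the plane of length (total variation) at most 1 meets the interiors
of at most 4 of the unit grid squares. -/
theorem curve_meets_at_most_four_squares (γ : ℝ → EuclideanSpace ℝ (Fin 2))
    (hcont : ContinuousOn γ (Set.Icc 0 1))
    (hlen : eVariationOn γ (Set.Icc 0 1) ≤ 1) :
    {ij : ℤ × ℤ | (γ '' Set.Icc 0 1 ∩ openGridSquare ij.1 ij.2).Nonempty}.encard ≤ 4 :=
  curve_meets_at_most_four_squares_general γ hlen
end

section
/- Let L > 1 be a real number, let γ : ℝ → ℝ² be a continuous, 1-Lipschitz map that is periodic with period L (i.e., γ(s + L) = γ(s) for all s), let t ∈ ℕ, and let P be a finite subset of the image of γ. Suppose that for every s ∈ ℝ, the set P ∩ γ([s, s+1]) has cardinality at most t. Then |P| ≤ t · L. -/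
/-- **Buffon-type counting lemma.** If `γ` is a closed curve of length `L > 1` parametrized by
arc length (continuous, `1`-Lipschitz, and `L`-periodic) and `P` is a finite subset of its image
such that every unit-length subsegment of the curve meets `P` in at most `t` points, then
`|P| ≤ t·L`. -/
theorem points_on_curve_bound (L : ℝ) (hL : 1 < L)
    (γ : ℝ → EuclideanSpace ℝ (Fin 2))
    (hcont : Continuous γ) (hlip : LipschitzWith 1 γ)
    (hper : ∀ s : ℝ, γ (s + L) = γ s)
    (t : ℕ) (P : Finset (EuclideanSpace ℝ (Fin 2)))
    (hP : (P : Set (EuclideanSpace ℝ (Fin 2))) ⊆ Set.range γ)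
    (hseg : ∀ s : ℝ, ((P : Set (EuclideanSpace ℝ (Fin 2))) ∩ γ '' Set.Icc s (s + 1)).ncard ≤ t) :
    (P.card : ℝ) ≤ t * L := by
  classical
  have hL0 : (0:ℝ) < L := lt_trans one_pos hL
  have hper' : Function.Periodic γ L := hper
  set σ : EuclideanSpace ℝ (Fin 2) → ℝ := fun p =>
    if h : ∃ s, 0 ≤ s ∧ s < L ∧ γ s = p then h.choose else 0 with hσdef
  have hσspec : ∀ p ∈ P, 0 ≤ σ p ∧ σ p < L ∧ γ (σ p) = p := by
    intro p hp
    obtain ⟨s, hs⟩ := hP hp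
    have hex : ∃ s, 0 ≤ s ∧ s < L ∧ γ s = p := by
      refine ⟨s - ⌊s / L⌋ * L, Int.sub_floor_div_mul_nonneg s hL0,
        Int.sub_floor_div_mul_lt s hL0, ?_⟩
      rw [hper'.sub_int_mul_eq, hs]
    simp only [hσdef, dif_pos hex]
    exact hex.choose_spec
  have key : ∀ n : ℕ, (n * P.card : ℝ) ≤ t * (n * L + 1) := by
    intro n
    set M : ℕ := ⌈(n:ℝ) * L⌉₊ with hM
    set f : EuclideanSpace ℝ (Fin 2) × ℕ → ℤ := fun q => ⌊σ q.1 + q.2 * L⌋ with hf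
    have hmem : ∀ q ∈ P ×ˢ Finset.range n, f q ∈ Finset.Ico (0:ℤ) M := by
      rintro ⟨p, j⟩ hq
      rw [Finset.mem_product, Finset.mem_range] at hq
      obtain ⟨h0, h1, -⟩ := hσspec p hq.1
      have hjL : 0 ≤ (j:ℝ) * L := by positivity
      have hx0 : 0 ≤ σ p + (j:ℝ) * L := by linarith
      have hxlt : σ p + (j:ℝ) * L < (n:ℝ) * L := by
        have hj : (j:ℝ) + 1 ≤ (n:ℝ) := by exact_mod_cast hq.2
        nlinarith
      rw [Finset.mem_Ico]
      constructor
      · exact Int.floor_nonneg.2 hx0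
      · refine Int.floor_lt.2 (lt_of_lt_of_le hxlt ?_)
        exact_mod_cast Nat.le_ceil _
    have hcount := Finset.card_eq_sum_card_fiberwise hmem
    have hfiber : ∀ k ∈ Finset.Ico (0:ℤ) M,
        ((P ×ˢ Finset.range n).filter (fun q => f q = k)).card ≤ t := by
      intro k _
      set Fib := (P ×ˢ Finset.range n).filter (fun q => f q = k) with hFib
      have hbasic : ∀ q ∈ Fib, q.1 ∈ P ∧
          (k:ℝ) ≤ σ q.1 + q.2 * L ∧ σ q.1 + q.2 * L < (k:ℝ) + 1 := by
        rintro ⟨p, j⟩ hq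
        rw [hFib, Finset.mem_filter, Finset.mem_product] at hq
        obtain ⟨⟨hp, -⟩, hfl⟩ := hq
        have hfl' : ⌊σ p + (j:ℝ) * L⌋ = k := hfl
        have h1 : (k:ℝ) ≤ σ p + (j:ℝ) * L := by
          rw [← hfl']; exact Int.floor_le _
        have h2 : σ p + (j:ℝ) * L < (k:ℝ) + 1 := by
          rw [← hfl']; exact Int.lt_floor_add_one _
        exact ⟨hp, h1, h2⟩
      have hinj : Set.InjOn Prod.fst (Fib : Set (EuclideanSpace ℝ (Fin 2) × ℕ)) := by
        rintro ⟨p, j⟩ hq ⟨p', j'⟩ hq' (h : p = p')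
        subst h
        obtain ⟨-, h1, h2⟩ := hbasic _ hq
        obtain ⟨-, h1', h2'⟩ := hbasic _ hq'
        have hjj : (j:ℝ) * L = (j':ℝ) * L := by
          rcases lt_trichotomy (j:ℝ) (j':ℝ) with h | h | h
          · have : (j:ℝ) + 1 ≤ (j':ℝ) := by exact_mod_cast h
            nlinarith
          · rw [h]
          · have : (j':ℝ) + 1 ≤ (j:ℝ) := by exact_mod_cast h
            nlinarith
        have : (j:ℝ) = (j':ℝ) := mul_right_cancel₀ (ne_of_gt hL0) hjj
        have : j = j' := by exact_mod_cast this
        rw [this]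
      have himgcard : (Fib.image Prod.fst).card = Fib.card :=
        Finset.card_image_of_injOn hinj
      have hsub : ↑(Fib.image Prod.fst) ⊆
          (P : Set (EuclideanSpace ℝ (Fin 2))) ∩ γ '' Set.Icc (k:ℝ) ((k:ℝ) + 1) := by
        intro p hp
        rw [Finset.coe_image] at hp
        obtain ⟨⟨p', j⟩, hq, rfl⟩ := hp
        obtain ⟨hpP, h1, h2⟩ := hbasic _ hq
        refine ⟨hpP, σ p' + (j:ℝ) * L, ⟨h1, le_of_lt h2⟩, ?_⟩
        rw [(hper'.nat_mul j) (σ p'), (hσspec p' hpP).2.2]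
      calc Fib.card = (↑(Fib.image Prod.fst) : Set _).ncard := by
              rw [Set.ncard_coe_finset, himgcard]
        _ ≤ ((P : Set (EuclideanSpace ℝ (Fin 2))) ∩ γ '' Set.Icc (k:ℝ) ((k:ℝ) + 1)).ncard :=
              Set.ncard_le_ncard hsub (P.finite_toSet.inter_of_left _)
        _ ≤ t := hseg (k:ℝ)
    have hnat : n * P.card ≤ M * t := by
      have := hcount.trans_le (Finset.sum_le_card_nsmul _ _ t hfiber)
      simpa [Finset.card_product, mul_comm, Int.toNat_natCast, smul_eq_mul] using this
    have hM' : (M:ℝ) ≤ (n:ℝ) * L + 1 := by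
      have : (0:ℝ) ≤ (n:ℝ) * L := by positivity
      exact le_of_lt (Nat.ceil_lt_add_one this)
    calc (n * P.card : ℝ) ≤ (M * t : ℕ) := by exact_mod_cast hnat
      _ = (M:ℝ) * t := by push_cast; ring
      _ ≤ ((n:ℝ) * L + 1) * t := by
          apply mul_le_mul_of_nonneg_right hM' (by positivity)
      _ = t * ((n:ℝ) * L + 1) := by ring
  refine le_of_forall_pos_le_add ?_
  intro ε hε
  obtain ⟨n, hn0, hn⟩ : ∃ n : ℕ, 0 < n ∧ (t:ℝ) ≤ n * ε := by
    obtain ⟨n, hn⟩ := exists_nat_ge ((t:ℝ) / ε)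
    refine ⟨n + 1, Nat.succ_pos n, ?_⟩
    rw [div_le_iff₀ hε] at hn
    have : (n:ℝ) * ε ≤ (↑(n+1)) * ε := by
      apply mul_le_mul_of_nonneg_right _ (le_of_lt hε)
      push_cast; linarith
    linarith
  have h := key n
  have hnp : (0:ℝ) < n := by exact_mod_cast hn0
  have hmul : (P.card : ℝ) * n ≤ (t * L + ε) * n := by nlinarith
  exact le_of_mul_le_mul_right hmul hnp
end

section
/- Let γ : [0,1] → ℝ² be a continuous closed curve (γ(0) = γ(1)) whose length (total variation) L satisfies L > 1. Then the number of pairs (i,j) ∈ ℤ² such that the image of γ intersects the open square (i,i+1) × (j,j+1) is at most 4·L. -/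
open Set Filter Topology
open scoped ENNReal

local notation "ℝ²" => EuclideanSpace ℝ (Fin 2)

namespace variationOnFromTo

variable {α E : Type*} [LinearOrder α] [PseudoMetricSpace E] {f : α → E} {s : Set α}

theorem dist_le_of_le (hf : LocallyBoundedVariationOn f s) {a b : α} (ha : a ∈ s) (hb : b ∈ s)
    (hab : a ≤ b) : dist (f a) (f b) ≤ variationOnFromTo f s a b := by
  rw [variationOnFromTo.eq_of_le f s hab, dist_edist]
  exact ENNReal.toReal_mono (hf a b ha hb)
    (eVariationOn.edist_le f ⟨ha, le_rfl, hab⟩ ⟨hb, hab, le_rfl⟩)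

theorem continuousOn [TopologicalSpace α] [OrderTopology α] (hf : LocallyBoundedVariationOn f s)
    (hc : ContinuousOn f s) {a : α} (ha : a ∈ s) : ContinuousOn (variationOnFromTo f s a) s := by
  intro b hb
  have hl := tendsto_left ha hb hf ((hc b hb).mono inter_subset_left)
  have hr := tendsto_right ha hb hf ((hc b hb).mono inter_subset_left)
  rw [dist_self, sub_zero] at hl
  rw [dist_self, add_zero] at hr
  rw [← continuousWithinAt_sdiff_self, sdiff_eq, ← Iio_union_Ioi, inter_union_distrib_left]
  exact ContinuousWithinAt.union hl hr

end variationOnFromTo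

theorem two_mul_dist_le_sum_dist_add_dist {α : Type*} [PseudoMetricSpace α] (f : ℕ → α)
    {j k n : ℕ} (hj : j ≤ n) (hk : k ≤ n) :
    2 * dist (f j) (f k) ≤ ∑ i ∈ Finset.range n, dist (f i) (f (i + 1)) + dist (f n) (f 0) := by
  wlog hjk : j ≤ k generalizing j k
  · rw [dist_comm]; exact this hk hj (le_of_not_ge hjk)
  have hsplit : ∑ i ∈ Finset.range n, dist (f i) (f (i + 1)) =
      ∑ i ∈ Finset.Ico 0 j, dist (f i) (f (i + 1)) + ∑ i ∈ Finset.Ico j k, dist (f i) (f (i + 1))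
        + ∑ i ∈ Finset.Ico k n, dist (f i) (f (i + 1)) := by
    rw [Finset.sum_Ico_consecutive _ (Nat.zero_le j) hjk,
      Finset.sum_Ico_consecutive _ (Nat.zero_le k) hk, Finset.range_eq_Ico]
  have h0j := dist_le_Ico_sum_dist f (Nat.zero_le j)
  have hjk' := dist_le_Ico_sum_dist f hjk
  have hkn := dist_le_Ico_sum_dist f hk
  have hround := dist_triangle4 (f j) (f 0) (f n) (f k)
  rw [dist_comm (f j) (f 0), dist_comm (f 0) (f n), dist_comm (f n) (f k)] at hround
  linarith

noncomputable def arcLength {E : Type*} [PseudoMetricSpace E] (γ : ℝ → E) (t : ℝ) : ℝ :=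
  variationOnFromTo γ (Icc 0 1) 0 t

section Curve

variable {E : Type*} [PseudoMetricSpace E] {γ : ℝ → E}

theorem arcLength_zero : arcLength γ 0 = 0 :=
  variationOnFromTo.self _ _ _

theorem arcLength_one : arcLength γ 1 = (eVariationOn γ (Icc 0 1)).toReal := by
  rw [arcLength, variationOnFromTo.eq_of_le _ _ zero_le_one, inter_self]

theorem arcLength_nonneg {t : ℝ} (ht : 0 ≤ t) : 0 ≤ arcLength γ t :=
  variationOnFromTo.nonneg_of_le _ _ ht

variable (hγ : BoundedVariationOn γ (Icc 0 1))
include hγ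

theorem arcLength_le_arcLength_one {t : ℝ} (ht : t ∈ Icc (0 : ℝ) 1) :
    arcLength γ t ≤ arcLength γ 1 :=
  variationOnFromTo.monotoneOn hγ.locallyBoundedVariationOn (left_mem_Icc.2 zero_le_one) ht
    (right_mem_Icc.2 zero_le_one) ht.2

theorem dist_le_arcLength_sub {s t : ℝ} (hs : s ∈ Icc (0 : ℝ) 1) (ht : t ∈ Icc (0 : ℝ) 1)
    (hst : s ≤ t) : dist (γ s) (γ t) ≤ arcLength γ t - arcLength γ s := by
  have hf := hγ.locallyBoundedVariationOn
  rw [arcLength, arcLength, variationOnFromTo.sub_right hf (left_mem_Icc.2 zero_le_one) ht hs]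
  exact variationOnFromTo.dist_le_of_le hf hs ht hst

theorem dist_le_abs_arcLength_sub {s t : ℝ} (hs : s ∈ Icc (0 : ℝ) 1) (ht : t ∈ Icc (0 : ℝ) 1) :
    dist (γ s) (γ t) ≤ |arcLength γ t - arcLength γ s| := by
  rcases le_total s t with hst | hts
  · exact (dist_le_arcLength_sub hγ hs ht hst).trans (le_abs_self _)
  · rw [dist_comm, abs_sub_comm]
    exact (dist_le_arcLength_sub hγ ht hs hts).trans (le_abs_self _)

theorem exists_arcLength_eq (hcont : ContinuousOn γ (Icc 0 1)) {c : ℝ}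
    (hc : c ∈ Icc 0 (arcLength γ 1)) : ∃ t ∈ Icc (0 : ℝ) 1, arcLength γ t = c := by
  have hℓ : ContinuousOn (arcLength γ) (Icc 0 1) :=
    variationOnFromTo.continuousOn hγ.locallyBoundedVariationOn hcont (left_mem_Icc.2 zero_le_one)
  rw [← arcLength_zero (γ := γ)] at hc
  exact intermediate_value_Icc zero_le_one hℓ hc

variable (hclosed : γ 0 = γ 1)
include hclosed

theorem dist_le_arcLength_one_sub {s t : ℝ} (hs : s ∈ Icc (0 : ℝ) 1) (ht : t ∈ Icc (0 : ℝ) 1) :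
    dist (γ t) (γ s) ≤ arcLength γ 1 - (arcLength γ t - arcLength γ s) := by
  have h0 := dist_le_arcLength_sub hγ (left_mem_Icc.2 zero_le_one) hs hs.1
  have h1 := dist_le_arcLength_sub hγ ht (right_mem_Icc.2 zero_le_one) ht.2
  have htri : dist (γ t) (γ s) ≤ dist (γ t) (γ 1) + dist (γ 0) (γ s) := by
    rw [hclosed]; exact dist_triangle _ _ _
  rw [arcLength_zero] at h0
  linarith

theorem dist_le_arcLength_one_div_two {s t : ℝ} (hs : s ∈ Icc (0 : ℝ) 1)
    (ht : t ∈ Icc (0 : ℝ) 1) : dist (γ s) (γ t) ≤ arcLength γ 1 / 2 := by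
  wlog hst : s ≤ t generalizing s t
  · rw [dist_comm]; exact this ht hs (le_of_not_ge hst)
  have h1 := dist_le_arcLength_sub hγ hs ht hst
  have h2 := dist_le_arcLength_one_sub hγ hclosed hs ht
  rw [dist_comm] at h2
  linarith

theorem sum_dist_add_dist_le_arcLength_one {p : ℕ → ℝ} (hp : Monotone p)
    (hpI : ∀ i, p i ∈ Icc (0 : ℝ) 1) (n : ℕ) :
    ∑ i ∈ Finset.range n, dist (γ (p i)) (γ (p (i + 1))) + dist (γ (p n)) (γ (p 0)) ≤
      arcLength γ 1 := by
  have hsum : ∑ i ∈ Finset.range n, dist (γ (p i)) (γ (p (i + 1))) ≤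
      arcLength γ (p n) - arcLength γ (p 0) := by
    rw [← Finset.sum_range_sub (fun i => arcLength γ (p i))]
    exact Finset.sum_le_sum fun i _ =>
      dist_le_arcLength_sub hγ (hpI i) (hpI (i + 1)) (hp (Nat.le_succ i))
  linarith [dist_le_arcLength_one_sub hγ hclosed (hpI 0) (hpI n)]

end Curve

theorem abs_sub_add_abs_sub_le_sqrt_two_mul_dist (p q : ℝ²) :
    |p 0 - q 0| + |p 1 - q 1| ≤ √2 * dist p q := by
  rw [EuclideanSpace.dist_eq, Fin.sum_univ_two, ← Real.sqrt_mul zero_le_two, Real.dist_eq,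
    Real.dist_eq, sq_abs, sq_abs]
  apply Real.le_sqrt_of_sq_le
  nlinarith [sq_nonneg (|p 0 - q 0| - |p 1 - q 1|), sq_abs (p 0 - q 0), sq_abs (p 1 - q 1)]

/-- Sorted, the four parameters are the vertices of a closed polygon inscribed in `γ`: its length
is at most `arcLength γ 1`, and its `ℓ¹`-length is at least twice the spread of either
coordinate. -/
theorem two_mul_sub_add_two_mul_sub_le {γ : ℝ → ℝ²} (hγ : BoundedVariationOn γ (Icc 0 1))
    (hclosed : γ 0 = γ 1) {s t u v : ℝ} (hs : s ∈ Icc (0 : ℝ) 1) (ht : t ∈ Icc (0 : ℝ) 1)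
    (hu : u ∈ Icc (0 : ℝ) 1) (hv : v ∈ Icc (0 : ℝ) 1) :
    2 * (γ t 0 - γ s 0) + 2 * (γ v 1 - γ u 1) ≤ √2 * arcLength γ 1 := by
  set T : Fin 4 → ℝ := ![s, t, u, v]
  set σ := Tuple.sort T
  set p : ℕ → ℝ := fun i => (T ∘ σ) ⟨min i 3, by omega⟩
  have hp : Monotone p := fun i j hij =>
    Tuple.monotone_sort T (Fin.mk_le_mk.2 (min_le_min_right 3 hij))
  have hTI : ∀ k, T k ∈ Icc (0 : ℝ) 1 := by
    intro k; fin_cases k <;> assumption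
  have hT : ∀ k, T k = p (σ.symm k) := by
    intro k
    have : (⟨min (σ.symm k : ℕ) 3, by omega⟩ : Fin 4) = σ.symm k := by
      ext; simp only; omega
    simp only [p, Function.comp_apply, this, Equiv.apply_symm_apply]
  set x : ℕ → ℝ := fun i => γ (p i) 0
  set y : ℕ → ℝ := fun i => γ (p i) 1
  have hx := two_mul_dist_le_sum_dist_add_dist x (j := σ.symm 1) (k := σ.symm 0) (n := 3)
    (by omega) (by omega)
  have hy := two_mul_dist_le_sum_dist_add_dist y (j := σ.symm 3) (k := σ.symm 2) (n := 3)
    (by omega) (by omega)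
  have hxy (i j : ℕ) : dist (x i) (x j) + dist (y i) (y j) ≤ √2 * dist (γ (p i)) (γ (p j)) := by
    simpa only [Real.dist_eq] using abs_sub_add_abs_sub_le_sqrt_two_mul_dist (γ (p i)) (γ (p j))
  calc 2 * (γ t 0 - γ s 0) + 2 * (γ v 1 - γ u 1)
      ≤ 2 * dist (x (σ.symm 1)) (x (σ.symm 0)) + 2 * dist (y (σ.symm 3)) (y (σ.symm 2)) := by
        simp only [x, y, ← hT, Real.dist_eq]
        gcongr <;> exact le_abs_self _
    _ ≤ ∑ i ∈ Finset.range 3, (dist (x i) (x (i + 1)) + dist (y i) (y (i + 1))) +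
          (dist (x 3) (x 0) + dist (y 3) (y 0)) := by
        rw [Finset.sum_add_distrib]; linarith
    _ ≤ ∑ i ∈ Finset.range 3, √2 * dist (γ (p i)) (γ (p (i + 1))) +
          √2 * dist (γ (p 3)) (γ (p 0)) := by
        gcongr with i <;> apply hxy
    _ = √2 * (∑ i ∈ Finset.range 3, dist (γ (p i)) (γ (p (i + 1))) +
          dist (γ (p 3)) (γ (p 0))) := by
        rw [mul_add, Finset.mul_sum]
    _ ≤ √2 * arcLength γ 1 := by
        gcongr
        exact sum_dist_add_dist_le_arcLength_one hγ hclosed hp (fun i => hTI _) 3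

noncomputable def gridCell (p : ℝ²) : ℤ × ℤ :=
  (⌊p 0⌋, ⌊p 1⌋)

theorem gridCell_eq_of_mem_openGridSquare {p : ℝ²} {i j : ℤ} (h : p ∈ openGridSquare i j) :
    gridCell p = (i, j) := by
  obtain ⟨⟨h0, h0'⟩, h1, h1'⟩ := h
  simp only [gridCell, Prod.mk.injEq, Int.floor_eq_iff]
  exact ⟨⟨h0.le, h0'⟩, h1.le, h1'⟩

theorem setOf_inter_openGridSquare_nonempty_subset_image_gridCell (X : Set ℝ²) :
    {ij : ℤ × ℤ | (X ∩ openGridSquare ij.1 ij.2).Nonempty} ⊆ gridCell '' X := by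
  rintro ij ⟨p, hpX, hp⟩
  exact ⟨p, hpX, gridCell_eq_of_mem_openGridSquare hp⟩

theorem floor_le_floor_add_one_of_dist_le_one {y z : ℝ} (h : dist y z ≤ 1) : ⌊y⌋ ≤ ⌊z⌋ + 1 := by
  rw [← Int.floor_add_one]
  exact Int.floor_le_floor (by linarith [le_abs_self (y - z), Real.dist_eq y z])

theorem exists_floor_mem_Icc_of_dist_le_one {ι : Type*} {X : Set ι} (f : ι → ℝ) {x : ℝ}
    (hx : ∀ i ∈ X, dist (f i) x ≤ 1) (hX : ∀ i ∈ X, ∀ j ∈ X, dist (f i) (f j) ≤ 1) :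
    ∃ a : ℤ, ⌊x⌋ ∈ Icc a (a + 1) ∧ ∀ i ∈ X, ⌊f i⌋ ∈ Icc a (a + 1) := by
  by_cases h : ∃ j ∈ X, ⌊f j⌋ < ⌊x⌋
  · obtain ⟨j, hj, hjx⟩ := h
    refine ⟨⌊x⌋ - 1, ⟨by omega, by omega⟩, fun i hi => ⟨?_, ?_⟩⟩
    · have := floor_le_floor_add_one_of_dist_le_one ((dist_comm x (f i)).trans_le (hx i hi))
      omega
    · have := floor_le_floor_add_one_of_dist_le_one (hX i hi j hj)
      omega
  · push Not at h
    exact ⟨⌊x⌋, ⟨le_rfl, by omega⟩, fun i hi =>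
      ⟨h i hi, floor_le_floor_add_one_of_dist_le_one (hx i hi)⟩⟩

theorem exists_gridCell_mem_Icc_prod_Icc {X : Set ℝ²} {q : ℝ²} (hq : ∀ p ∈ X, dist p q ≤ 1)
    (hX : ∀ p ∈ X, ∀ p' ∈ X, dist p p' ≤ 1) :
    ∃ a b : ℤ, gridCell q ∈ Icc a (a + 1) ×ˢ Icc b (b + 1) ∧
      gridCell '' X ⊆ Icc a (a + 1) ×ˢ Icc b (b + 1) := by
  have hcoord (k : Fin 2) : ∃ a : ℤ, ⌊q k⌋ ∈ Icc a (a + 1) ∧ ∀ p ∈ X, ⌊p k⌋ ∈ Icc a (a + 1) :=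
    exists_floor_mem_Icc_of_dist_le_one (· k)
      (fun p hp => (PiLp.dist_apply_le p q k).trans (hq p hp))
      (fun p hp p' hp' => (PiLp.dist_apply_le p p' k).trans (hX p hp p' hp'))
  obtain ⟨a, hqa, ha⟩ := hcoord 0
  obtain ⟨b, hqb, hb⟩ := hcoord 1
  exact ⟨a, b, ⟨hqa, hqb⟩, by rintro _ ⟨p, hp, rfl⟩; exact ⟨ha p hp, hb p hp⟩⟩

theorem encard_Icc_prod_Icc_add_one (a b : ℤ) :
    (Icc a (a + 1) ×ˢ Icc b (b + 1) : Set (ℤ × ℤ)).encard = 4 := by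
  rw [encard_prod, ← Finset.coe_Icc, ← Finset.coe_Icc, encard_coe_eq_coe_finsetCard,
    encard_coe_eq_coe_finsetCard, Int.card_Icc, Int.card_Icc, show a + 1 + 1 - a = 2 by ring,
    show b + 1 + 1 - b = 2 by ring]
  rfl

theorem encard_image_gridCell_le_four {X : Set ℝ²} (hX : ∀ p ∈ X, ∀ p' ∈ X, dist p p' ≤ 1) :
    (gridCell '' X).encard ≤ 4 := by
  rcases X.eq_empty_or_nonempty with rfl | ⟨q, hq⟩
  · simp
  obtain ⟨a, b, -, hsub⟩ := exists_gridCell_mem_Icc_prod_Icc (fun p hp => hX p hp q hq) hX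
  exact (encard_mono hsub).trans (encard_Icc_prod_Icc_add_one a b).le

/-- Both blocks of four cells contain the cell of `q`, so together they have at most seven. -/
theorem encard_image_gridCell_union_le_seven {A B : Set ℝ²} {q : ℝ²}
    (hAq : ∀ p ∈ A, dist p q ≤ 1) (hBq : ∀ p ∈ B, dist p q ≤ 1)
    (hA : ∀ p ∈ A, ∀ p' ∈ A, dist p p' ≤ 1) (hB : ∀ p ∈ B, ∀ p' ∈ B, dist p p' ≤ 1) :
    (gridCell '' (A ∪ B)).encard ≤ 7 := by
  obtain ⟨a, b, hqA, hA⟩ := exists_gridCell_mem_Icc_prod_Icc hAq hA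
  obtain ⟨a', b', hqB, hB⟩ := exists_gridCell_mem_Icc_prod_Icc hBq hB
  set K := (Icc a (a + 1) ×ˢ Icc b (b + 1) : Set (ℤ × ℤ))
  set K' := (Icc a' (a' + 1) ×ˢ Icc b' (b' + 1) : Set (ℤ × ℤ))
  have hinter : 1 ≤ (K ∩ K').encard := one_le_encard_iff_nonempty.2 ⟨_, hqA, hqB⟩
  have hsum := encard_union_add_encard_inter K K'
  rw [encard_Icc_prod_Icc_add_one, encard_Icc_prod_Icc_add_one] at hsum
  have hunion : (K ∪ K').encard + 1 ≤ 7 + 1 := hsum ▸ add_le_add_right hinter _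
  rw [image_union]
  exact (encard_mono (union_subset_union hA hB)).trans
    ((ENat.add_le_add_iff_right ENat.one_ne_top).1 hunion)

theorem card_Icc_floor_floor_add_le (a w : ℝ) (hw : 0 ≤ w) :
    ((Finset.Icc ⌊a⌋ ⌊a + w⌋).card : ℝ) ≤ w + 2 := by
  have hle : ⌊a⌋ ≤ ⌊a + w⌋ + 1 := by
    have := Int.floor_le_floor (by linarith : a ≤ a + w); omega
  have hcard : ((Finset.Icc ⌊a⌋ ⌊a + w⌋).card : ℤ) = ⌊a + w⌋ + 1 - ⌊a⌋ :=
    Int.card_Icc_of_le _ _ hle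
  rw [← Int.cast_natCast, hcard]
  push_cast
  linarith [Int.floor_le (a + w), Int.sub_one_lt_floor a]

theorem encard_image_gridCell_le_of_mem_Icc {X : Set ℝ²} {a b w h : ℝ} (hw : 0 ≤ w) (hh : 0 ≤ h)
    (hX : ∀ p ∈ X, p 0 ∈ Icc a (a + w) ∧ p 1 ∈ Icc b (b + h)) :
    ((gridCell '' X).encard : ℝ≥0∞) ≤ ENNReal.ofReal ((w + 2) * (h + 2)) := by
  have hsub : gridCell '' X ⊆ ↑(Finset.Icc ⌊a⌋ ⌊a + w⌋ ×ˢ Finset.Icc ⌊b⌋ ⌊b + h⌋) := by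
    rintro _ ⟨p, hp, rfl⟩
    obtain ⟨⟨h0, h0'⟩, h1, h1'⟩ := hX p hp
    simp only [Finset.coe_product, Finset.coe_Icc, mem_prod, mem_Icc, gridCell]
    exact ⟨⟨Int.floor_le_floor h0, Int.floor_le_floor h0'⟩,
      Int.floor_le_floor h1, Int.floor_le_floor h1'⟩
  refine (ENat.toENNReal_le.2 ((encard_mono hsub).trans_eq
    (encard_coe_eq_coe_finsetCard _))).trans ?_
  rw [ENat.toENNReal_coe, ← ENNReal.ofReal_natCast, Finset.card_product, Nat.cast_mul]
  exact ENNReal.ofReal_le_ofReal (mul_le_mul (card_Icc_floor_floor_add_le a w hw)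
    (card_Icc_floor_floor_add_le b h hh) (Nat.cast_nonneg _) (by linarith))

section PlanarCurve

variable {γ : ℝ → ℝ²} (hcont : ContinuousOn γ (Icc 0 1)) (hγ : BoundedVariationOn γ (Icc 0 1))
include hcont hγ

theorem encard_image_gridCell_image_le_sq (hclosed : γ 0 = γ 1) :
    ((gridCell '' (γ '' Icc 0 1)).encard : ℝ≥0∞) ≤
      ENNReal.ofReal ((√2 * arcLength γ 1 / 4 + 2) ^ 2) := by
  have hI : IsCompact (Icc (0 : ℝ) 1) := isCompact_Icc
  have hne : (Icc (0 : ℝ) 1).Nonempty := nonempty_Icc.2 zero_le_one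
  have hcoord (k : Fin 2) : ContinuousOn (fun t => γ t k) (Icc 0 1) :=
    (PiLp.continuous_apply 2 _ k).comp_continuousOn hcont
  obtain ⟨s, hs, hmin0⟩ := hI.exists_isMinOn hne (hcoord 0)
  obtain ⟨t, ht, hmax0⟩ := hI.exists_isMaxOn hne (hcoord 0)
  obtain ⟨u, hu, hmin1⟩ := hI.exists_isMinOn hne (hcoord 1)
  obtain ⟨v, hv, hmax1⟩ := hI.exists_isMaxOn hne (hcoord 1)
  rw [isMinOn_iff] at hmin0 hmin1
  rw [isMaxOn_iff] at hmax0 hmax1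
  have hbox : ∀ p ∈ γ '' Icc 0 1, p 0 ∈ Icc (γ s 0) (γ s 0 + (γ t 0 - γ s 0)) ∧
      p 1 ∈ Icc (γ u 1) (γ u 1 + (γ v 1 - γ u 1)) := by
    rintro _ ⟨r, hr, rfl⟩
    simp only [add_sub_cancel]
    exact ⟨⟨hmin0 r hr, hmax0 r hr⟩, hmin1 r hr, hmax1 r hr⟩
  refine (encard_image_gridCell_le_of_mem_Icc (sub_nonneg.2 (hmin0 t ht))
    (sub_nonneg.2 (hmin1 v hv)) hbox).trans (ENNReal.ofReal_le_ofReal ?_)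
  have hwh := two_mul_sub_add_two_mul_sub_le hγ hclosed hs ht hu hv
  set w := γ t 0 - γ s 0
  set h := γ v 1 - γ u 1
  have hw : 0 ≤ w := sub_nonneg.2 (hmin0 t ht)
  have hh : 0 ≤ h := sub_nonneg.2 (hmin1 v hv)
  calc (w + 2) * (h + 2) ≤ ((w + h) / 2 + 2) ^ 2 := by nlinarith [sq_nonneg (w - h)]
    _ ≤ (√2 * arcLength γ 1 / 4 + 2) ^ 2 := pow_le_pow_left₀ (by positivity) (by linarith) 2

theorem encard_image_gridCell_arc_le_seven {c : ℝ} (hc : c ∈ Icc 0 (arcLength γ 1)) :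
    (gridCell '' (γ '' {t ∈ Icc 0 1 | arcLength γ t ∈ Icc (c - 1) (c + 1)})).encard ≤ 7 := by
  obtain ⟨t₀, ht₀, hct₀⟩ := exists_arcLength_eq hγ hcont hc
  have hsplit : {t ∈ Icc 0 1 | arcLength γ t ∈ Icc (c - 1) (c + 1)} =
      {t ∈ Icc 0 1 | arcLength γ t ∈ Icc (c - 1) c} ∪
        {t ∈ Icc 0 1 | arcLength γ t ∈ Icc c (c + 1)} := by
    ext t
    simp only [mem_union, mem_Icc]
    constructor
    · rintro ⟨ht, h1, h2⟩
      rcases le_total (arcLength γ t) c with h | h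
      exacts [Or.inl ⟨ht, h1, h⟩, Or.inr ⟨ht, h, h2⟩]
    · rintro (⟨ht, h1, h2⟩ | ⟨ht, h1, h2⟩)
      exacts [⟨ht, h1, by linarith⟩, ⟨ht, by linarith, h2⟩]
  have hclose {s t : ℝ} (hs : s ∈ Icc (0 : ℝ) 1) (ht : t ∈ Icc (0 : ℝ) 1)
      (hst : |arcLength γ t - arcLength γ s| ≤ 1) : dist (γ s) (γ t) ≤ 1 :=
    (dist_le_abs_arcLength_sub hγ hs ht).trans hst
  rw [hsplit, image_union]
  apply encard_image_gridCell_union_le_seven (q := γ t₀)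
  · rintro _ ⟨s, ⟨hs, h1, h2⟩, rfl⟩
    exact hclose hs ht₀ (abs_le.2 ⟨by linarith, by linarith⟩)
  · rintro _ ⟨s, ⟨hs, h1, h2⟩, rfl⟩
    exact hclose hs ht₀ (abs_le.2 ⟨by linarith, by linarith⟩)
  · rintro _ ⟨s, ⟨hs, h1, h2⟩, rfl⟩ _ ⟨t, ⟨ht, h3, h4⟩, rfl⟩
    exact hclose hs ht (abs_le.2 ⟨by linarith, by linarith⟩)
  · rintro _ ⟨s, ⟨hs, h1, h2⟩, rfl⟩ _ ⟨t, ⟨ht, h3, h4⟩, rfl⟩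
    exact hclose hs ht (abs_le.2 ⟨by linarith, by linarith⟩)

theorem encard_image_gridCell_image_le_seven_mul :
    (gridCell '' (γ '' Icc 0 1)).encard ≤ 7 * (⌊arcLength γ 1 / 2⌋₊ + 1 : ℕ) := by
  set L := arcLength γ 1
  have hL : 0 ≤ L := arcLength_nonneg zero_le_one
  -- the centres are clipped at `L`, so that they are values of `arcLength γ`
  set c : ℕ → ℝ := fun m => min (2 * m + 1) L
  have hcover : γ '' Icc 0 1 ⊆ ⋃ m ∈ Finset.range (⌊L / 2⌋₊ + 1),
      γ '' {t ∈ Icc 0 1 | arcLength γ t ∈ Icc (c m - 1) (c m + 1)} := by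
    rintro _ ⟨t, ht, rfl⟩
    have h0 := arcLength_nonneg (γ := γ) ht.1
    have hle := arcLength_le_arcLength_one hγ ht
    set m := ⌊arcLength γ t / 2⌋₊
    have hm := Nat.floor_le (div_nonneg h0 zero_le_two)
    have hm' := Nat.lt_floor_add_one (arcLength γ t / 2)
    refine mem_biUnion (x := m) (Finset.mem_range.2 (Nat.lt_succ_of_le
      (Nat.floor_le_floor (by linarith)))) ⟨t, ⟨ht, ?_, ?_⟩, rfl⟩
    · linarith [min_le_left (2 * (m : ℝ) + 1) L]
    · linarith [le_min (by linarith : arcLength γ t - 1 ≤ 2 * (m : ℝ) + 1)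
        (by linarith : arcLength γ t - 1 ≤ L)]
  calc (gridCell '' (γ '' Icc 0 1)).encard
      ≤ (⋃ m ∈ Finset.range (⌊L / 2⌋₊ + 1),
          gridCell '' (γ '' {t ∈ Icc 0 1 | arcLength γ t ∈ Icc (c m - 1) (c m + 1)})).encard := by
        rw [← image_iUnion₂]; exact encard_mono (image_mono hcover)
    _ ≤ ∑ m ∈ Finset.range (⌊L / 2⌋₊ + 1),
          (gridCell '' (γ '' {t ∈ Icc 0 1 | arcLength γ t ∈ Icc (c m - 1) (c m + 1)})).encard :=
        Finset.set_encard_biUnion_le _ _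
    _ ≤ ∑ _m ∈ Finset.range (⌊L / 2⌋₊ + 1), 7 :=
        Finset.sum_le_sum fun m _ => encard_image_gridCell_arc_le_seven hcont hγ
          ⟨le_min (by positivity) hL, min_le_right _ _⟩
    _ = 7 * (⌊L / 2⌋₊ + 1 : ℕ) := by simp [mul_comm]

end PlanarCurve

theorem ENat.toENNReal_le_ofReal {x : ℕ∞} {n : ℕ} {r : ℝ} (hx : x ≤ n) (hn : (n : ℝ) ≤ r) :
    (x : ℝ≥0∞) ≤ ENNReal.ofReal r := by
  refine (ENat.toENNReal_le.2 hx).trans ?_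
  rw [ENat.toENNReal_coe, ← ENNReal.ofReal_natCast]
  exact ENNReal.ofReal_le_ofReal hn

/-- A continuous closed curve in the plane of length `L > 1` meets the interiors of at most
`4·L` of the unit grid squares. -/
theorem closed_curve_meets_few_squares (γ : ℝ → EuclideanSpace ℝ (Fin 2)) (L : ℝ)
    (hcont : ContinuousOn γ (Set.Icc 0 1)) (hclosed : γ 0 = γ 1)
    (hlen : eVariationOn γ (Set.Icc 0 1) = ENNReal.ofReal L) (hL : 1 < L) :
    {ij : ℤ × ℤ | (γ '' Set.Icc 0 1 ∩ openGridSquare ij.1 ij.2).Nonempty}.encard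
      ≤ ENNReal.ofReal (4 * L) := by
  have hγ : BoundedVariationOn γ (Icc 0 1) := by
    rw [BoundedVariationOn, hlen]; exact ENNReal.ofReal_ne_top
  have hlen' : arcLength γ 1 = L := by
    rw [arcLength_one, hlen, ENNReal.toReal_ofReal (by linarith)]
  refine (ENat.toENNReal_le.2 (encard_mono
    (setOf_inter_openGridSquare_nonempty_subset_image_gridCell _))).trans ?_
  rcases lt_or_ge L 2 with hL2 | hL2
  · refine ENat.toENNReal_le_ofReal (n := 4) (encard_image_gridCell_le_four ?_)
      (by push_cast; linarith)
    rintro _ ⟨s, hs, rfl⟩ _ ⟨t, ht, rfl⟩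
    linarith [dist_le_arcLength_one_div_two hγ hclosed hs ht]
  rcases lt_or_ge L 14 with hL14 | hL14
  · refine (encard_image_gridCell_image_le_sq hcont hγ hclosed).trans
      (ENNReal.ofReal_le_ofReal ?_)
    have hsqrt : √2 ≤ 3 / 2 := by rw [Real.sqrt_le_left (by norm_num)]; norm_num
    rw [hlen']
    calc (√2 * L / 4 + 2) ^ 2 ≤ (3 / 2 * L / 4 + 2) ^ 2 := by gcongr
      _ ≤ 4 * L := by nlinarith [mul_nonneg (sub_nonneg.2 hL2) (sub_nonneg.2 hL14.le)]
  · refine ENat.toENNReal_le_ofReal (encard_image_gridCell_image_le_seven_mul hcont hγ) ?_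
    rw [hlen']
    push_cast
    nlinarith [Nat.floor_le (by linarith : 0 ≤ L / 2)]
end

section
/- Let S ⊆ ℝ² be a bounded measurable set whose topological frontier is the image of a continuous closed curve of length L with L > 1. Then the number of pairs (i,j) ∈ ℤ² such that the open square (i,i+1) × (j,j+1) intersects S is at most area(S) + 4·L, where area denotes two-dimensional Lebesgue measure. -/
open MeasureTheory

/-!
A grid square is connected, so if it meets `S` but not `frontier S` it lies inside `S`. Those
squares are disjoint and of area one, hence there are at most `area(S)` of them. The remaining
squares meeting `S` meet the curve. Sort them into four classes by the parities of their indices: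
two distinct squares of one class are more than `1` apart, so if the closed curve meets `n ≥ 2`
of them, the points where it visits them, taken in order along the curve and closed up through
`γ 0 = γ 1`, span a closed polygon with `n` sides of length `> 1`, and `n ≤ L`.
-/

open Set Finset
open scoped ENNReal

theorem Set.toENNReal_encard_le_of_forall_finset {α : Type*} {X : Set α} {c : ℝ≥0∞}
    (h : ∀ F : Finset α, (F : Set α) ⊆ X → (#F : ℝ≥0∞) ≤ c) : (X.encard : ℝ≥0∞) ≤ c := by
  rw [← ENNReal.tsum_set_one, ENNReal.tsum_eq_iSup_sum]
  refine iSup_le fun F => ?_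
  simpa using h (F.map (Function.Embedding.subtype _)) (by simp)

namespace eVariationOn

variable {α E : Type*} [LinearOrder α] [PseudoEMetricSpace E]

theorem natCast_card_sub_one_mul_le (f : α → E) (s : Finset α) {δ : ℝ≥0∞}
    (hδ : (s : Set α).Pairwise fun x y => δ ≤ edist (f x) (f y)) :
    ((#s - 1 : ℕ) : ℝ≥0∞) * δ ≤ eVariationOn f s := by
  rcases s.eq_empty_or_nonempty with rfl | hs
  · simp
  have hpos : 0 < #s := hs.card_pos
  set t := s.orderEmbOfFin rfl
  set u : ℕ → α := fun k => t ⟨min k (#s - 1), by omega⟩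
  have hu : Monotone u := fun k l hkl => t.monotone (Fin.mk_le_mk.2 (min_le_min_right _ hkl))
  have hstep : ∀ k ∈ range (#s - 1), δ ≤ edist (f (u (k + 1))) (f (u k)) := by
    intro k hk
    rw [Finset.mem_range] at hk
    refine hδ (s.orderEmbOfFin_mem rfl _) (s.orderEmbOfFin_mem rfl _) fun h => ?_
    have := t.injective h
    simp only [Fin.mk.injEq] at this
    omega
  calc ((#s - 1 : ℕ) : ℝ≥0∞) * δ = #(range (#s - 1)) • δ := by simp [nsmul_eq_mul]
    _ ≤ ∑ k ∈ range (#s - 1), edist (f (u (k + 1))) (f (u k)) := card_nsmul_le_sum _ _ _ hstep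
    _ ≤ eVariationOn f s := sum_le hu fun k => s.orderEmbOfFin_mem rfl _

theorem natCast_card_mul_le_of_eq (f : α → E) {a b : α} (hf : f a = f b) (s : Finset α)
    (hs : (s : Set α) ⊆ Icc a b) (hcard : 1 < #s) {δ : ℝ≥0∞}
    (hδ : (s : Set α).Pairwise fun x y => δ ≤ edist (f x) (f y)) :
    (#s : ℝ≥0∞) * δ ≤ eVariationOn f (Icc a b) := by
  have hne : s.Nonempty := Finset.card_pos.1 (by omega)
  set x := s.min' hne
  set y := s.max' hne
  have hxy : x < y := s.min'_lt_max'_of_card hcard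
  have hax : a ≤ x := (hs (s.min'_mem hne)).1
  have hyb : y ≤ b := (hs (s.max'_mem hne)).2
  have hsplit : eVariationOn f (Icc a x) + eVariationOn f (Icc x y) + eVariationOn f (Icc y b)
      = eVariationOn f (Icc a b) := by
    have h := fun {p q r : α} (hpq : p ≤ q) (hqr : q ≤ r) =>
      Icc_add_Icc f (s := univ) hpq hqr (mem_univ q)
    simp only [univ_inter] at h
    rw [h hax hxy.le, h (hax.trans hxy.le) hyb]
  have hchain : ((#s - 1 : ℕ) : ℝ≥0∞) * δ ≤ eVariationOn f (Icc x y) :=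
    (natCast_card_sub_one_mul_le f s hδ).trans
      (mono f fun z hz => ⟨s.min'_le z hz, s.le_max' z hz⟩)
  -- closing the curve: `f y` and `f x` are joined through `f b = f a`
  have hwrap : δ ≤ eVariationOn f (Icc a x) + eVariationOn f (Icc y b) :=
    calc δ ≤ edist (f y) (f x) := hδ (s.max'_mem hne) (s.min'_mem hne) hxy.ne'
      _ ≤ edist (f y) (f b) + edist (f a) (f x) := by rw [hf]; exact edist_triangle _ _ _
      _ ≤ eVariationOn f (Icc y b) + eVariationOn f (Icc a x) :=
        add_le_add (edist_le f ⟨le_rfl, hyb⟩ ⟨hyb, le_rfl⟩)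
          (edist_le f ⟨le_rfl, hax⟩ ⟨hax, le_rfl⟩)
      _ = _ := add_comm _ _
  calc (#s : ℝ≥0∞) * δ = ((#s - 1 : ℕ) : ℝ≥0∞) * δ + δ := by
        rw [← add_one_mul]; congr; norm_cast; omega
    _ ≤ eVariationOn f (Icc x y) + (eVariationOn f (Icc a x) + eVariationOn f (Icc y b)) :=
        add_le_add hchain hwrap
    _ = eVariationOn f (Icc a b) := by rw [← hsplit]; ring

theorem encard_setOf_inter_image_nonempty_le {ι : Type*} {A : ι → Set E}
    {P : Set ι} (hA : P.Pairwise fun i j => ∀ p ∈ A i, ∀ q ∈ A j, 1 ≤ edist p q)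
    {f : α → E} {a b : α} (hf : f a = f b) (h1 : 1 ≤ eVariationOn f (Icc a b)) :
    ({i ∈ P | (A i ∩ f '' Icc a b).Nonempty}.encard : ℝ≥0∞) ≤ eVariationOn f (Icc a b) := by
  classical
  refine Set.toENNReal_encard_le_of_forall_finset fun F hF => ?_
  rcases le_or_gt #F 1 with hF1 | hF1
  · exact le_trans (by exact_mod_cast hF1) h1
  have hmeet : ∀ i ∈ F, ∃ t ∈ Icc a b, f t ∈ A i := fun i hi => by
    obtain ⟨_, hpA, t, ht, rfl⟩ := (hF hi).2
    exact ⟨t, ht, hpA⟩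
  have : Nonempty α := ⟨a⟩
  choose! t ht hft using hmeet
  have hsep : ∀ i ∈ F, ∀ j ∈ F, i ≠ j → 1 ≤ edist (f (t i)) (f (t j)) :=
    fun i hi j hj hij => hA (hF hi).1 (hF hj).1 hij _ (hft i hi) _ (hft j hj)
  have hinj : Set.InjOn t F := fun i hi j hj htij => by
    by_contra hij
    simpa [htij] using hsep i hi j hj hij
  have hcard : #(F.image t) = #F := card_image_of_injOn hinj
  have hpair : (F.image t : Set α).Pairwise fun x y => 1 ≤ edist (f x) (f y) := by
    simp only [coe_image]
    rintro _ ⟨i, hi, rfl⟩ _ ⟨j, hj, rfl⟩ hij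
    exact hsep i hi j hj (ne_of_apply_ne t hij)
  have := natCast_card_mul_le_of_eq f hf (F.image t)
    (by simpa [Set.subset_def] using ht) (hcard ▸ hF1) hpair
  rwa [hcard, mul_one] at this

end eVariationOn

theorem floor_eq_of_mem_openGridSquare {i j : ℤ} {p : EuclideanSpace ℝ (Fin 2)}
    (hp : p ∈ openGridSquare i j) : (⌊p 0⌋, ⌊p 1⌋) = (i, j) := by
  rw [Int.floor_eq_iff.2 ⟨hp.1.1.le, hp.1.2⟩, Int.floor_eq_iff.2 ⟨hp.2.1.le, hp.2.2⟩]

theorem pairwiseDisjoint_openGridSquare :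
    (univ : Set (ℤ × ℤ)).PairwiseDisjoint fun ij => openGridSquare ij.1 ij.2 :=
  fun _ _ _ _ hab => Set.disjoint_left.2 fun _ hpa hpb =>
    hab ((floor_eq_of_mem_openGridSquare hpa).symm.trans (floor_eq_of_mem_openGridSquare hpb))

theorem convex_openGridSquare (i j : ℤ) : Convex ℝ (openGridSquare i j) :=
  fun _ hp _ hq _ _ ha hb hab =>
    ⟨convex_Ioo _ _ hp.1 hq.1 ha hb hab, convex_Ioo _ _ hp.2 hq.2 ha hb hab⟩

theorem openGridSquare_eq_preimage (i j : ℤ) : openGridSquare i j =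
    (MeasurableEquiv.toLp 2 (Fin 2 → ℝ)).symm ⁻¹'
      univ.pi fun k => Ioo (![(i : ℝ), j] k) (![(i : ℝ), j] k + 1) := by
  ext p
  simp [openGridSquare, Fin.forall_fin_two]

theorem measurableSet_openGridSquare (i j : ℤ) : MeasurableSet (openGridSquare i j) := by
  rw [openGridSquare_eq_preimage]
  exact (MeasurableEquiv.toLp 2 (Fin 2 → ℝ)).symm.measurable
    (MeasurableSet.univ_pi fun _ => measurableSet_Ioo)

theorem volume_openGridSquare (i j : ℤ) : volume (openGridSquare i j) = 1 := by
  rw [openGridSquare_eq_preimage,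
    (EuclideanSpace.volume_preserving_symm_measurableEquiv_toLp (Fin 2)).measure_preimage_equiv,
    volume_pi_pi]
  simp [Real.volume_Ioo]

theorem encard_setOf_openGridSquare_subset_le_volume (S : Set (EuclideanSpace ℝ (Fin 2))) :
    ({ij : ℤ × ℤ | openGridSquare ij.1 ij.2 ⊆ S}.encard : ℝ≥0∞) ≤ volume S := by
  set I := {ij : ℤ × ℤ | openGridSquare ij.1 ij.2 ⊆ S}
  calc (I.encard : ℝ≥0∞) = ∑' ij : I, volume (openGridSquare ij.1.1 ij.1.2) := by
        simp only [volume_openGridSquare, ENNReal.tsum_set_one]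
    _ = volume (⋃ ij ∈ I, openGridSquare ij.1 ij.2) :=
        (measure_biUnion I.to_countable (pairwiseDisjoint_openGridSquare.subset (subset_univ I))
          fun ij _ => measurableSet_openGridSquare ij.1 ij.2).symm
    _ ≤ volume S := measure_mono (iUnion₂_subset fun _ h => h)

def gridParity (ij : ℤ × ℤ) : ZMod 2 × ZMod 2 := (ij.1, ij.2)

theorem one_lt_abs_sub_of_mem_Ioo {i j : ℤ} (hij : i ≠ j) (hpar : (i : ZMod 2) = j) {x y : ℝ}
    (hx : x ∈ Ioo (i : ℝ) (i + 1)) (hy : y ∈ Ioo (j : ℝ) (j + 1)) : 1 < |x - y| := by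
  have h2 : (2 : ℤ) ∣ j - i := (ZMod.intCast_eq_intCast_iff_dvd_sub i j 2).1 hpar
  have hgap : (i : ℝ) + 2 ≤ j ∨ (j : ℝ) + 2 ≤ i := by
    have : i + 2 ≤ j ∨ j + 2 ≤ i := by omega
    exact_mod_cast this
  rw [lt_abs]
  rcases hgap with h | h
  · right; linarith [hx.2, hy.1]
  · left; linarith [hx.1, hy.2]

theorem one_lt_dist_of_mem_openGridSquare {a b : ℤ × ℤ} (hab : a ≠ b)
    (hpar : gridParity a = gridParity b) {p q : EuclideanSpace ℝ (Fin 2)}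
    (hp : p ∈ openGridSquare a.1 a.2) (hq : q ∈ openGridSquare b.1 b.2) : 1 < dist p q := by
  simp only [gridParity, Prod.mk.injEq] at hpar
  rcases not_and_or.1 (mt Prod.ext_iff.2 hab) with h | h
  · calc 1 < |p 0 - q 0| := one_lt_abs_sub_of_mem_Ioo h hpar.1 hp.1 hq.1
      _ ≤ dist p q := PiLp.dist_apply_le p q 0
  · calc 1 < |p 1 - q 1| := one_lt_abs_sub_of_mem_Ioo h hpar.2 hp.2 hq.2
      _ ≤ dist p q := PiLp.dist_apply_le p q 1

theorem encard_setOf_openGridSquare_inter_image_nonempty_le {α : Type*} [LinearOrder α]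
    {γ : α → EuclideanSpace ℝ (Fin 2)} {a b : α} (hγ : γ a = γ b)
    (h1 : 1 ≤ eVariationOn γ (Icc a b)) :
    ({ij : ℤ × ℤ | (openGridSquare ij.1 ij.2 ∩ γ '' Icc a b).Nonempty}.encard : ℝ≥0∞)
      ≤ 4 * eVariationOn γ (Icc a b) := by
  set V := eVariationOn γ (Icc a b)
  have hclass : ∀ r : ZMod 2 × ZMod 2,
      ({ij ∈ gridParity ⁻¹' {r} | (openGridSquare ij.1 ij.2 ∩ γ '' Icc a b).Nonempty}.encard
        : ℝ≥0∞) ≤ V := fun r =>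
    eVariationOn.encard_setOf_inter_image_nonempty_le
      (fun i hi j hj hij p hp q hq => by
        rw [edist_dist, ← ENNReal.ofReal_one]
        exact ENNReal.ofReal_le_ofReal
          (one_lt_dist_of_mem_openGridSquare hij (hi.trans hj.symm) hp hq).le)
      hγ h1
  calc _ ≤ ((⋃ r : ZMod 2 × ZMod 2, {ij ∈ gridParity ⁻¹' {r} |
          (openGridSquare ij.1 ij.2 ∩ γ '' Icc a b).Nonempty}).encard : ℝ≥0∞) := by
        gcongr
        intro ij hij
        exact mem_iUnion.2 ⟨gridParity ij, rfl, hij⟩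
    _ ≤ ∑ r : ZMod 2 × ZMod 2, ({ij ∈ gridParity ⁻¹' {r} |
          (openGridSquare ij.1 ij.2 ∩ γ '' Icc a b).Nonempty}.encard : ℝ≥0∞) := by
        exact (ENat.toENNReal_le.2 (encard_iUnion_le_of_fintype _)).trans_eq
          (map_sum ENat.toENNRealRingHom _ _)
    _ ≤ ∑ _r : ZMod 2 × ZMod 2, V := Finset.sum_le_sum fun r _ => hclass r
    _ = 4 * V := by simp [nsmul_eq_mul]

theorem IsPreconnected.subset_of_disjoint_frontier {X : Type*} [TopologicalSpace X]
    {s t : Set X} (hs : IsPreconnected s) (hst : (s ∩ t).Nonempty)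
    (hfr : Disjoint s (frontier t)) : s ⊆ t := by
  have hint : ∀ x ∈ s, x ∈ closure t → x ∈ interior t := fun x hxs hxt => by
    by_contra hx
    exact hfr.notMem_of_mem_left hxs ⟨hxt, hx⟩
  refine (hs.subset_of_closure_inter_subset isOpen_interior ?_ ?_).trans interior_subset
  · obtain ⟨x, hxs, hxt⟩ := hst
    exact ⟨x, hxs, hint x hxs (subset_closure hxt)⟩
  · rintro x ⟨hxc, hxs⟩
    exact hint x hxs (closure_mono interior_subset hxc)

theorem card_squares_meeting_state_general (S : Set (EuclideanSpace ℝ (Fin 2)))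
    (hSbdd : Bornology.IsBounded S)
    (γ : ℝ → EuclideanSpace ℝ (Fin 2)) (L : ℝ)
    (hclosed : γ 0 = γ 1)
    (hfront : frontier S = γ '' Set.Icc 0 1)
    (hlen : eVariationOn γ (Set.Icc 0 1) = ENNReal.ofReal L) (hL : 1 < L) :
    {ij : ℤ × ℤ | (openGridSquare ij.1 ij.2 ∩ S).Nonempty}.encard
      ≤ ENNReal.ofReal ((volume S).toReal + 4 * L) := by
  set inside := {ij : ℤ × ℤ | openGridSquare ij.1 ij.2 ⊆ S}
  set meetingCurve := {ij : ℤ × ℤ | (openGridSquare ij.1 ij.2 ∩ γ '' Icc 0 1).Nonempty}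
  have hcover :
      {ij : ℤ × ℤ | (openGridSquare ij.1 ij.2 ∩ S).Nonempty} ⊆ inside ∪ meetingCurve := by
    intro ij hij
    by_cases hfr : (openGridSquare ij.1 ij.2 ∩ frontier S).Nonempty
    · rw [hfront] at hfr
      exact Or.inr hfr
    · exact Or.inl ((convex_openGridSquare ij.1 ij.2).isPreconnected.subset_of_disjoint_frontier
        hij (Set.disjoint_iff_inter_eq_empty.2 (Set.not_nonempty_iff_eq_empty.1 hfr)))
  have hmeetingCurve : (meetingCurve.encard : ℝ≥0∞) ≤ 4 * ENNReal.ofReal L := hlen ▸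
    encard_setOf_openGridSquare_inter_image_nonempty_le hclosed (hlen ▸ by simpa using hL.le)
  calc _ ≤ ((inside ∪ meetingCurve).encard : ℝ≥0∞) := by gcongr
    _ ≤ inside.encard + meetingCurve.encard := by exact_mod_cast encard_union_le _ _
    _ ≤ volume S + 4 * ENNReal.ofReal L :=
        add_le_add (encard_setOf_openGridSquare_subset_le_volume S) hmeetingCurve
    _ = ENNReal.ofReal ((volume S).toReal + 4 * L) := by
        rw [ENNReal.ofReal_add ENNReal.toReal_nonneg (by linarith), ENNReal.ofReal_toReal
          hSbdd.measure_lt_top.ne, ENNReal.ofReal_mul (by norm_num)]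
        simp

/-- If `S ⊆ ℝ²` is a bounded measurable set whose frontier is the image of a continuous closed
curve of length `L > 1`, then at most `area(S) + 4·L` of the open unit grid squares meet `S`. -/
theorem card_squares_meeting_state (S : Set (EuclideanSpace ℝ (Fin 2)))
    (hSmeas : MeasurableSet S) (hSbdd : Bornology.IsBounded S)
    (γ : ℝ → EuclideanSpace ℝ (Fin 2)) (L : ℝ)
    (hcont : ContinuousOn γ (Set.Icc 0 1)) (hclosed : γ 0 = γ 1)
    (hfront : frontier S = γ '' Set.Icc 0 1)
    (hlen : eVariationOn γ (Set.Icc 0 1) = ENNReal.ofReal L) (hL : 1 < L) :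
    {ij : ℤ × ℤ | (openGridSquare ij.1 ij.2 ∩ S).Nonempty}.encard
      ≤ ENNReal.ofReal ((volume S).toReal + 4 * L) :=
  card_squares_meeting_state_general S hSbdd γ L hclosed hfront hlen hL
end
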